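/- Let M be a real symmetric matrix and v a vector with all entries nonzero satisfying M v = λ v. Define C = S M S⁻¹ with S = diag(1/v₁,…,1/vₙ). Suppose for all i ≠ j the sign condition sign(M(i,j)) · sign(v_i) · sign(v_j) ≤ 0 holds (i.e., the signed graph is balanced with coloring given by the signs of v). Then for every row i, the Gershgorin disc left-end of C equals λ: C(i,i) − Σ_{j≠i} |C(i,j)| = λ. -/

import Mathlib

/-!
Since `M v = λ v`, every row of `C` sums to `λ`. The balance condition says that the
off-diagonal entry `C i j = M i j v_j / v_i` has the sign of `M i j v_i v_j`, which is `≤ 0`;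
hence `-|C i j| = C i j` off the diagonal and the Gershgorin left-end is exactly the row sum.
-/

open Finset

namespace Real

theorem sign_mul (x y : ℝ) : sign (x * y) = sign x * sign y := by
  rcases lt_trichotomy x 0 with hx | rfl | hx <;> rcases lt_trichotomy y 0 with hy | rfl | hy <;>
    simp [sign_of_pos, sign_of_neg, mul_pos_of_neg_of_neg, mul_neg_of_neg_of_pos,
      mul_neg_of_pos_of_neg, *]

theorem sign_nonpos_iff {r : ℝ} : sign r ≤ 0 ↔ r ≤ 0 := by
  rcases lt_trichotomy r 0 with hr | rfl | hr
  · simp [sign_of_neg hr, hr.le]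
  · simp
  · simp [sign_of_pos hr, hr.not_ge]

theorem mul_div_nonpos_of_sign_mul_nonpos {x y z : ℝ} (h : sign x * sign y * sign z ≤ 0) :
    x * z / y ≤ 0 := by
  have hxyz : x * y * z ≤ 0 := by rwa [← sign_mul, ← sign_mul, sign_nonpos_iff] at h
  rcases eq_or_ne y 0 with rfl | hy
  · simp
  calc x * z / y = x * y * z / (y * y) := by field_simp
    _ ≤ 0 := div_nonpos_of_nonpos_of_nonneg hxyz (mul_self_nonneg y)

end Real

theorem sub_sum_erase_abs_eq_sum_of_nonpos {ι α : Type*} [AddCommGroup α] [LinearOrder α]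
    [IsOrderedAddMonoid α] [DecidableEq ι] {s : Finset ι} {i : ι} (hi : i ∈ s) (f : ι → α)
    (hf : ∀ j ≠ i, f j ≤ 0) :
    f i - ∑ j ∈ s.erase i, |f j| = ∑ j ∈ s, f j := by
  have habs : ∑ j ∈ s.erase i, |f j| = -∑ j ∈ s.erase i, f j := by
    rw [← sum_neg_distrib]
    exact sum_congr rfl fun j hj => abs_of_nonpos (hf j (ne_of_mem_erase hj))
  rw [habs, sub_neg_eq_add, add_sum_erase s f hi]

theorem Matrix.sum_mul_div_eq_of_mulVec_eq_smul {ι K : Type*} [Fintype ι] [Field K]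
    {M : Matrix ι ι K} {v : ι → K} {lam : K} (heig : M.mulVec v = lam • v) {i : ι}
    (hvi : v i ≠ 0) :
    ∑ j, M i j * v j / v i = lam := by
  have hrow : ∑ j, M i j * v j = lam * v i := by
    simpa [Matrix.mulVec, dotProduct] using congrFun heig i
  rw [← sum_div, hrow, mul_div_cancel_right₀ _ hvi]

theorem gdpa_balanced_general {n : ℕ}
    (M : Matrix (Fin n) (Fin n) ℝ)
    (v : Fin n → ℝ) (hv : ∀ i, v i ≠ 0) (lam : ℝ)
    (heig : M.mulVec v = lam • v)
    (hsign : ∀ i j, i ≠ j →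
      Real.sign (M i j) * Real.sign (v i) * Real.sign (v j) ≤ 0)
    (C : Matrix (Fin n) (Fin n) ℝ)
    (hC : ∀ i j, C i j = M i j * v j / v i) :
    ∀ i, C i i - ∑ j ∈ Finset.univ.erase i, |C i j| = lam := by
  intro i
  have hoff : ∀ j ≠ i, C i j ≤ 0 := fun j hji => by
    rw [hC]
    exact Real.mul_div_nonpos_of_sign_mul_nonpos (hsign i j hji.symm)
  rw [sub_sum_erase_abs_eq_sum_of_nonpos (mem_univ i) (C i) hoff]
  simp_rw [hC i]
  exact Matrix.sum_mul_div_eq_of_mulVec_eq_smul heig (hv i)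

/-- GDPA theorem: if `M v = λ v` with all `v i ≠ 0`, and the balance sign condition
`sign(M i j) · sign(v i) · sign(v j) ≤ 0` holds for all `i ≠ j`, then for
`C = S M S⁻¹` with `S = diag(1/vᵢ)`, every Gershgorin disc left-end of `C`
equals `λ`. -/
theorem gdpa_balanced {n : ℕ}
    (M : Matrix (Fin n) (Fin n) ℝ) (hM : M.IsHermitian)
    (v : Fin n → ℝ) (hv : ∀ i, v i ≠ 0) (lam : ℝ)
    (heig : M.mulVec v = lam • v)
    (hsign : ∀ i j, i ≠ j →
      Real.sign (M i j) * Real.sign (v i) * Real.sign (v j) ≤ 0)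
    (C : Matrix (Fin n) (Fin n) ℝ)
    (hC : ∀ i j, C i j = M i j * v j / v i) :
    ∀ i, C i i - ∑ j ∈ Finset.univ.erase i, |C i j| = lam :=
  gdpa_balanced_general M v hv lam heig hsign C hC
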